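/- Let s ∈ ℝ and p, q ∈ (0,∞) with q > p, and let τ := 1/p - 1/q, so that τ + 1/q - 1/p = 0. Then the sequence t with t_{R_j} = |R_j|^{s/n+1/2+τ-1/p} for R_j = [0,2^{-j})^n and t_Q = 0 otherwise satisfies ‖t‖_{ḟ^{s,τ}_{p,q}} < ∞ but ‖t‖_{ḟ^{s,0}_{q,q}} = ‖t‖_{ḟ^s_{q,q}} = ∞; hence the norm equivalence ‖t‖_{ḟ^{s,τ}_{p,q}} ∼ ‖t‖_{ḟ^{s,τ+1/q-1/p}_{q,q}} fails at the endpoint τ = 1/p - 1/q. -/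

import Mathlib

open MeasureTheory ENNReal

/-- A dyadic cube `Q_{jk} = 2^{-j}([0,1)^n + k)` in `ℝⁿ`, recorded by its
generation `j ∈ ℤ` and position `k ∈ ℤⁿ`. -/
structure DyadicCube (n : ℕ) where
  j : ℤ
  k : Fin n → ℤ

namespace DyadicCube

/-- The dyadic cube as a subset of `ℝⁿ`. -/
def toSet {n : ℕ} (Q : DyadicCube n) : Set (Fin n → ℝ) :=
  {x | ∀ i, (Q.k i : ℝ) * (2 : ℝ) ^ (-Q.j) ≤ x i ∧
        x i < ((Q.k i : ℝ) + 1) * (2 : ℝ) ^ (-Q.j)}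

/-- The Lebesgue measure `|Q| = 2^{-jn}` of a dyadic cube, as an element of `ℝ≥0∞`. -/
noncomputable def vol {n : ℕ} (Q : DyadicCube n) : ℝ≥0∞ :=
  (2 : ℝ≥0∞) ^ (-(Q.j : ℝ) * n)

/-- The characteristic function `χ_Q`, with values in `ℝ≥0∞`. -/
noncomputable def ind {n : ℕ} (Q : DyadicCube n) (x : Fin n → ℝ) : ℝ≥0∞ :=
  Q.toSet.indicator (fun _ => (1 : ℝ≥0∞)) x

end DyadicCube

open DyadicCube

/-- The coefficient `|Q|^{-s/n - 1/2}`. -/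
noncomputable def coeff {n : ℕ} (s : ℝ) (Q : DyadicCube n) : ℝ≥0∞ :=
  Q.vol ^ (-(s / (n : ℝ)) - 1 / 2)

/-- The `ℓ^q`-norm `(Σ_i a_i^q)^{1/q}` of a family of extended nonnegative reals,
with the usual modification (`sup`) when `q = ∞`. -/
noncomputable def lqSum {ι : Type*} (q : ℝ≥0∞) (a : ι → ℝ≥0∞) : ℝ≥0∞ :=
  if q = ∞ then ⨆ i, a i else (∑' i, a i ^ q.toReal) ^ (1 / q.toReal)

/-- The `L^p`-norm `(∫_A g^p dx)^{1/p}` over a set `A ⊆ ℝⁿ`, with the usual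
modification (`sup` over `x ∈ A`) when `p = ∞`. -/
noncomputable def lpIntOn {n : ℕ} (p : ℝ≥0∞) (A : Set (Fin n → ℝ))
    (g : (Fin n → ℝ) → ℝ≥0∞) : ℝ≥0∞ :=
  if p = ∞ then ⨆ x ∈ A, g x
  else (∫⁻ x in A, g x ^ p.toReal) ^ (1 / p.toReal)

/-- The Triebel–Lizorkin-type sequence norm
`‖t‖_{ḟ^{s,τ}_{p,q}} = sup_P |P|^{-τ} ( ∫_P ( Σ_{Q ⊆ P} [|Q|^{-s/n-1/2} |t_Q| χ_Q(x)]^q )^{p/q} dx )^{1/p}`,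
with the usual modifications when `p = ∞` or `q = ∞`. -/
noncomputable def fNorm (n : ℕ) (s τ : ℝ) (p q : ℝ≥0∞) (t : DyadicCube n → ℂ) : ℝ≥0∞ :=
  ⨆ P : DyadicCube n, P.vol ^ (-τ) *
    lpIntOn p P.toSet fun x =>
      lqSum q fun Q : {Q : DyadicCube n // Q.toSet ⊆ P.toSet} =>
        coeff s Q.1 * ‖t Q.1‖₊ * ind Q.1 x

/-- The Besov-type sequence norm
`‖t‖_{ḃ^{s,τ}_{p,q}} = sup_P |P|^{-τ} ( Σ_{j ≥ j_P} ( ∫_P [ Σ_{Q ⊆ P, ℓ(Q)=2^{-j}} |Q|^{-s/n-1/2} |t_Q| χ_Q(x) ]^p dx )^{q/p} )^{1/q}`,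
with the usual modifications when `p = ∞` or `q = ∞`. -/
noncomputable def bNorm (n : ℕ) (s τ : ℝ) (p q : ℝ≥0∞) (t : DyadicCube n → ℂ) : ℝ≥0∞ :=
  ⨆ P : DyadicCube n, P.vol ^ (-τ) *
    lqSum q fun j : {j : ℤ // P.j ≤ j} =>
      lpIntOn p P.toSet fun x =>
        ∑' Q : {Q : DyadicCube n // Q.toSet ⊆ P.toSet ∧ Q.j = j.1},
          coeff s Q.1 * ‖t Q.1‖₊ * ind Q.1 x

/-- The `ḟ^{σ}_{∞,∞} = ḃ^{σ}_{∞,∞}` sequence norm `sup_Q |Q|^{-σ/n - 1/2} |t_Q|`. -/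
noncomputable def supNorm (n : ℕ) (σ : ℝ) (t : DyadicCube n → ℂ) : ℝ≥0∞ :=
  ⨆ Q : DyadicCube n, coeff σ Q * ‖t Q‖₊

/-- The test sequence with `t_{R_j} = |R_j|^{s/n + 1/2 + τ - 1/p}` for
`R_j = [0,2^{-j})^n` (the dyadic cube with `k = 0`), and `t_Q = 0` otherwise. -/
noncomputable def testSeq (n : ℕ) (s τ p : ℝ) : DyadicCube n → ℂ := fun Q =>
  if Q.k = 0 then
    ((((2 : ℝ) ^ (-(Q.j : ℝ) * n)) ^ (s / n + 1 / 2 + τ - 1 / p) : ℝ) : ℂ)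
  else 0

/-- The cube `R_j = [0, 2^{-j})^n`. -/
def Rcube (n : ℕ) (j : ℤ) : DyadicCube n := ⟨j, 0⟩

section Aux

variable {n : ℕ}

lemma toSet_eq (Q : DyadicCube n) : Q.toSet =
    Set.univ.pi fun i => Set.Ico ((Q.k i : ℝ) * 2^(-Q.j)) (((Q.k i : ℝ)+1) * 2^(-Q.j)) := by
  ext x; simp [DyadicCube.toSet, Set.mem_pi, Set.mem_Ico]

lemma measurableSet_toSet (Q : DyadicCube n) : MeasurableSet Q.toSet := by
  rw [toSet_eq]; exact MeasurableSet.univ_pi fun i => measurableSet_Ico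

lemma volume_Rcube (j : ℤ) : volume (Rcube n j).toSet = (2:ℝ≥0∞) ^ (-(j:ℝ) * n) := by
  rw [toSet_eq]
  simp only [Rcube, Pi.zero_apply, Int.cast_zero, zero_mul, zero_add, one_mul]
  rw [volume_pi_pi]
  rw [Finset.prod_congr rfl (fun i _ => by rw [Real.volume_Ico, sub_zero]), Finset.prod_const]
  have h : ENNReal.ofReal ((2:ℝ)^(-j)) = (2:ℝ≥0∞) ^ (-(j:ℝ)) := by
    rw [← Real.rpow_intCast 2 (-j), ← ENNReal.ofReal_rpow_of_pos (by norm_num)]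
    norm_num
  rw [Finset.card_univ, Fintype.card_fin, h, ← ENNReal.rpow_natCast, ← ENNReal.rpow_mul]

lemma Rcube_subset {j0 j : ℤ} (h : j0 ≤ j) : (Rcube n j).toSet ⊆ (Rcube n j0).toSet := by
  intro x hx i
  obtain ⟨h1, h2⟩ := hx i
  simp only [Rcube, Pi.zero_apply, Int.cast_zero, zero_mul, zero_add, one_mul] at h1 h2 ⊢
  refine ⟨h1, lt_of_lt_of_le h2 ?_⟩
  exact zpow_le_zpow_right₀ (by norm_num) (neg_le_neg h)

lemma zero_mem_toSet {Q : DyadicCube n} (hQ : Q.k = 0) : (0 : Fin n → ℝ) ∈ Q.toSet := by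
  intro i
  simp only [hQ, Pi.zero_apply, Int.cast_zero, zero_mul, zero_add, one_mul]
  exact ⟨le_refl _, zpow_pos (by norm_num) _⟩

lemma k_eq_zero_of_subset {Q P : DyadicCube n} (hQ : Q.k = 0) (h : Q.toSet ⊆ P.toSet) :
    P.k = 0 := by
  have h0 := h (zero_mem_toSet hQ)
  funext i
  obtain ⟨h1, h2⟩ := h0 i
  have hc : (0:ℝ) < (2:ℝ)^(-P.j) := zpow_pos (by norm_num) _
  simp only [Pi.zero_apply] at h1 h2 ⊢
  have hk1 : (P.k i : ℝ) ≤ 0 := by nlinarith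
  have hk2 : (0:ℝ) < (P.k i : ℝ) + 1 := by nlinarith
  have hk1' : P.k i ≤ 0 := by exact_mod_cast hk1
  have hk2' : (0:ℤ) < P.k i + 1 := by exact_mod_cast hk2
  omega

instance : Countable (DyadicCube n) := by
  have hinj : Function.Injective (fun Q : DyadicCube n => (Q.j, Q.k)) := by
    intro a b h; cases a; cases b; simpa using h
  exact hinj.countable

lemma j_le_of_subset (hn : 0 < n) {j0 j : ℤ}
    (h : (Rcube n j).toSet ⊆ (Rcube n j0).toSet) : j0 ≤ j := by
  by_contra hlt
  push_neg at hlt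
  have h2 : (2:ℝ)^(-j0) < (2:ℝ)^(-j) := by
    apply zpow_lt_zpow_right₀ (by norm_num) (by omega)
  have hx : (fun _ : Fin n => (2:ℝ)^(-j0)) ∈ (Rcube n j).toSet := by
    intro i
    simp only [Rcube, Pi.zero_apply, Int.cast_zero, zero_mul, zero_add, one_mul]
    exact ⟨le_of_lt (zpow_pos (by norm_num) _), h2⟩
  have := (h hx ⟨0, hn⟩).2
  simp only [Rcube, Pi.zero_apply, Int.cast_zero, zero_mul, zero_add, one_mul] at this
  exact absurd this (lt_irrefl _)

lemma nnnorm_testSeq_Rcube (s τ' p : ℝ) (j : ℤ) :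
    (‖testSeq n s τ' p (Rcube n j)‖₊ : ℝ≥0∞)
      = (2:ℝ≥0∞) ^ ((-(j:ℝ)*n) * (s/n + 1/2 + τ' - 1/p)) := by
  simp only [testSeq, Rcube, eq_self_iff_true, if_true, Complex.nnnorm_real]
  rw [← Real.rpow_mul (by norm_num : (0:ℝ) ≤ 2)]
  rw [← enorm_eq_nnnorm, Real.enorm_eq_ofReal (Real.rpow_nonneg (by norm_num) _)]
  rw [← ENNReal.ofReal_rpow_of_pos (by norm_num)]
  norm_num

lemma nnnorm_testSeq_ne (s τ' p : ℝ) {Q : DyadicCube n} (hQ : Q.k ≠ 0) :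
    (‖testSeq n s τ' p Q‖₊ : ℝ≥0∞) = 0 := by
  simp [testSeq, if_neg hQ]

lemma coeff_mul_testSeq (s p q : ℝ) (hq : q ≠ 0) (j : ℤ) :
    coeff s (Rcube n j) * (‖testSeq n s (1/p - 1/q) p (Rcube n j)‖₊ : ℝ≥0∞)
      = (2:ℝ≥0∞) ^ ((j:ℝ) * n / q) := by
  rw [nnnorm_testSeq_Rcube, coeff]
  show ((2:ℝ≥0∞) ^ (-((j:ℤ):ℝ) * n)) ^ (-(s / (n : ℝ)) - 1 / 2) * _ = _
  rw [← ENNReal.rpow_mul, ← ENNReal.rpow_add _ _ (by norm_num) (by norm_num)]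
  congr 1
  field_simp
  ring

lemma ind_rpow (Q : DyadicCube n) (x : Fin n → ℝ) {r : ℝ} (hr : 0 < r) :
    ind Q x ^ r = ind Q x := by
  by_cases hx : x ∈ Q.toSet
  · simp [ind, Set.indicator_of_mem hx]
  · simp [ind, Set.indicator_of_notMem hx, ENNReal.zero_rpow_of_pos hr]

lemma mul_ind_rpow (c : ℝ≥0∞) (Q : DyadicCube n) (x : Fin n → ℝ) {r : ℝ} (hr : 0 < r) :
    (c * ind Q x) ^ r = c ^ r * ind Q x := by
  rw [ENNReal.mul_rpow_of_nonneg _ _ hr.le, ind_rpow Q x hr]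

lemma measurable_ind (Q : DyadicCube n) : Measurable (Q.ind) :=
  measurable_const.indicator (measurableSet_toSet Q)

lemma lintegral_const_mul_ind (P : Set (Fin n → ℝ)) (c : ℝ≥0∞) (Q : DyadicCube n)
    (hQP : Q.toSet ⊆ P) :
    ∫⁻ x in P, c * ind Q x = c * volume Q.toSet := by
  rw [lintegral_const_mul _ (measurable_ind Q)]
  congr 1
  have hieq : (Q.ind : (Fin n → ℝ) → ℝ≥0∞) = Q.toSet.indicator (fun _ => 1) := rfl
  rw [hieq, lintegral_indicator (measurableSet_toSet Q), setLIntegral_one,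
    Measure.restrict_apply (measurableSet_toSet Q), Set.inter_eq_self_of_subset_left hQP]

lemma tsum_rpow_le {ι : Type*} (a : ι → ℝ≥0∞) {r : ℝ} (hr0 : 0 < r) (hr1 : r ≤ 1) :
    (∑' i, a i) ^ r ≤ ∑' i, a i ^ r := by
  have hfin : ∀ s : Finset ι, (∑ i ∈ s, a i) ^ r ≤ ∑ i ∈ s, a i ^ r := by
    intro s
    classical
    induction s using Finset.induction with
    | empty => simp [ENNReal.zero_rpow_of_pos hr0]
    | insert _ _ hx ih =>
      rw [Finset.sum_insert hx, Finset.sum_insert hx]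
      exact le_trans (ENNReal.rpow_add_le_add_rpow _ _ hr0.le hr1) (by gcongr)
  rw [ENNReal.tsum_eq_iSup_sum]
  have hmono : Monotone (fun x : ℝ≥0∞ => x ^ r) := fun _ _ h => ENNReal.rpow_le_rpow h hr0.le
  rw [hmono.map_iSup_of_continuousAt (ENNReal.continuous_rpow_const.continuousAt)
    (by simp [ENNReal.zero_rpow_of_pos hr0])]
  exact iSup_le fun s => (hfin s).trans (ENNReal.sum_le_tsum s)

/-- The natural bijection `ℕ ≃ {j : ℤ // j0 ≤ j}`. -/
def eNat (j0 : ℤ) : ℕ ≃ {j : ℤ // j0 ≤ j} where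
  toFun m := ⟨j0 + m, le_add_of_nonneg_right (Int.ofNat_nonneg m)⟩
  invFun j := (j.1 - j0).toNat
  left_inv m := by simp
  right_inv j := by
    ext; simp [Int.toNat_of_nonneg (sub_nonneg.2 j.2)]

lemma tsum_two_rpow (j0 : ℤ) (c : ℝ) :
    ∑' j : {j : ℤ // j0 ≤ j}, (2:ℝ≥0∞) ^ ((j.1:ℝ) * c)
      = (2:ℝ≥0∞) ^ ((j0:ℝ) * c) * (1 - (2:ℝ≥0∞)^c)⁻¹ := by
  rw [← (eNat j0).tsum_eq]
  have h : ∀ m : ℕ, (2:ℝ≥0∞) ^ ((((eNat j0) m).1 : ℝ) * c)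
      = (2:ℝ≥0∞) ^ ((j0:ℝ) * c) * ((2:ℝ≥0∞)^c) ^ m := by
    intro m
    show (2:ℝ≥0∞) ^ (((j0 + (m:ℤ) : ℤ) : ℝ) * c) = _
    push_cast
    rw [add_mul, ENNReal.rpow_add _ _ (by norm_num) (by norm_num)]
    congr 1
    rw [← ENNReal.rpow_natCast ((2:ℝ≥0∞)^c) m, ← ENNReal.rpow_mul]
    ring_nf
  rw [tsum_congr h, ENNReal.tsum_mul_left, ENNReal.tsum_geometric]

lemma tsum_subtype_reduce (hn : 0 < n) (j0 : ℤ) (f : DyadicCube n → ℝ≥0∞)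
    (hf : ∀ Q : DyadicCube n, Q.k ≠ 0 → f Q = 0) :
    ∑' Q : {Q : DyadicCube n // Q.toSet ⊆ (Rcube n j0).toSet}, f Q.1
      = ∑' j : {j : ℤ // j0 ≤ j}, f (Rcube n j.1) := by
  symm
  set g : {j : ℤ // j0 ≤ j} → {Q : DyadicCube n // Q.toSet ⊆ (Rcube n j0).toSet} :=
    fun j => ⟨Rcube n j.1, Rcube_subset j.2⟩ with hg
  have hginj : Function.Injective g := by
    intro a b h
    have : Rcube n a.1 = Rcube n b.1 := congrArg Subtype.val h
    exact Subtype.ext (by simpa [Rcube] using congrArg DyadicCube.j this)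
  have hsupp : Function.support (fun Q : {Q : DyadicCube n // Q.toSet ⊆ (Rcube n j0).toSet} =>
      f Q.1) ⊆ Set.range g := by
    intro Q hQ
    by_cases hk : Q.1.k = 0
    · have hQR : Q.1 = Rcube n Q.1.j := by
        cases' Q with Q hQs; cases Q; simp_all [Rcube]
      have hj : j0 ≤ Q.1.j := j_le_of_subset hn (by rw [← hQR]; exact Q.2)
      exact ⟨⟨Q.1.j, hj⟩, Subtype.ext hQR.symm⟩
    · exact absurd (hf Q.1 hk) hQ
  exact hginj.tsum_eq hsupp

/-- Pointwise identification of the inner `ℓ^q` sum over `Q ⊆ R_{j0}`. -/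
lemma tsum_q_eq (hn : 0 < n) (s p q : ℝ) (hq : 0 < q) (j0 : ℤ) (x : Fin n → ℝ) :
    (∑' Q : {Q : DyadicCube n // Q.toSet ⊆ (Rcube n j0).toSet},
        (coeff s Q.1 * (‖testSeq n s (1/p - 1/q) p Q.1‖₊ : ℝ≥0∞) * ind Q.1 x) ^ q)
      = ∑' j : {j : ℤ // j0 ≤ j}, (2:ℝ≥0∞) ^ ((j.1:ℝ) * n) * ind (Rcube n j.1) x := by
  rw [tsum_subtype_reduce hn j0
    (fun Q => (coeff s Q * (‖testSeq n s (1/p - 1/q) p Q‖₊ : ℝ≥0∞) * ind Q x) ^ q)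
    (fun Q hQ => by
      show (coeff s Q * (‖testSeq n s (1/p - 1/q) p Q‖₊ : ℝ≥0∞) * ind Q x) ^ q = 0
      rw [nnnorm_testSeq_ne s _ p hQ, mul_zero, zero_mul, ENNReal.zero_rpow_of_pos hq])]
  refine tsum_congr fun j => ?_
  rw [coeff_mul_testSeq s p q hq.ne', mul_ind_rpow _ _ _ hq, ← ENNReal.rpow_mul,
    div_mul_cancel₀ _ hq.ne']


/-- If `P` is not anchored at the origin, the inner sum vanishes identically. -/
lemma term_zero (s τ0 τ' p' : ℝ) {pq qq : ℝ} (hpq0 : 0 < pq) (hqq0 : 0 < qq)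
    {P : DyadicCube n} (hk : P.k ≠ 0) :
    P.vol ^ (-τ0) *
      lpIntOn (ENNReal.ofReal pq) P.toSet (fun x =>
        lqSum (ENNReal.ofReal qq)
          fun Q : {Q : DyadicCube n // Q.toSet ⊆ P.toSet} =>
            coeff s Q.1 * (‖testSeq n s τ' p' Q.1‖₊ : ℝ≥0∞) * ind Q.1 x) = 0 := by
  have hlq : ∀ x : Fin n → ℝ,
      (lqSum (ENNReal.ofReal qq)
        fun Q : {Q : DyadicCube n // Q.toSet ⊆ P.toSet} =>
          coeff s Q.1 * (‖testSeq n s τ' p' Q.1‖₊ : ℝ≥0∞) * ind Q.1 x) = 0 := by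
    intro x
    rw [lqSum, if_neg ofReal_ne_top, ENNReal.toReal_ofReal hqq0.le]
    have hz : ∀ Q : {Q : DyadicCube n // Q.toSet ⊆ P.toSet},
        (coeff s Q.1 * (‖testSeq n s τ' p' Q.1‖₊ : ℝ≥0∞) * ind Q.1 x) ^ qq = 0 := by
      intro Q
      have hQk : Q.1.k ≠ 0 := fun h => hk (k_eq_zero_of_subset h Q.2)
      rw [nnnorm_testSeq_ne s _ p' hQk, mul_zero, zero_mul, ENNReal.zero_rpow_of_pos hqq0]
    rw [tsum_congr hz, tsum_zero, ENNReal.zero_rpow_of_pos (by positivity)]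
  rw [lpIntOn, if_neg ofReal_ne_top, ENNReal.toReal_ofReal hpq0.le]
  have : ∀ x : Fin n → ℝ, (lqSum (ENNReal.ofReal qq)
        fun Q : {Q : DyadicCube n // Q.toSet ⊆ P.toSet} =>
          coeff s Q.1 * (‖testSeq n s τ' p' Q.1‖₊ : ℝ≥0∞) * ind Q.1 x) ^ pq = 0 := by
    intro x; rw [hlq x, ENNReal.zero_rpow_of_pos hpq0]
  rw [lintegral_congr this, lintegral_zero, ENNReal.zero_rpow_of_pos (by positivity), mul_zero]

/-- The key uniform bound for cubes anchored at the origin. -/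
lemma key_bound (hn : 0 < n) (s p q : ℝ) (hp : 0 < p) (hpq : p < q) (j0 : ℤ) :
    (Rcube n j0).vol ^ (-(1/p - 1/q)) *
      lpIntOn (ENNReal.ofReal p) (Rcube n j0).toSet (fun x =>
        lqSum (ENNReal.ofReal q)
          fun Q : {Q : DyadicCube n // Q.toSet ⊆ (Rcube n j0).toSet} =>
            coeff s Q.1 * (‖testSeq n s (1/p - 1/q) p Q.1‖₊ : ℝ≥0∞) * ind Q.1 x)
    ≤ ((1 - (2:ℝ≥0∞) ^ ((n:ℝ)*(p/q - 1)))⁻¹) ^ (1/p) := by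
  have hq0 : 0 < q := hp.trans hpq
  have hr0 : 0 < p/q := div_pos hp hq0
  have hr1 : p/q ≤ 1 := (div_le_one hq0).2 hpq.le
  set c : ℝ := (n:ℝ) * (p/q - 1) with hc
  set K0 : ℝ≥0∞ := (1 - (2:ℝ≥0∞) ^ c)⁻¹ with hK0
  rw [lpIntOn, if_neg ofReal_ne_top, ENNReal.toReal_ofReal hp.le]
  have hpt : ∀ x : Fin n → ℝ,
      (lqSum (ENNReal.ofReal q)
        fun Q : {Q : DyadicCube n // Q.toSet ⊆ (Rcube n j0).toSet} =>
          coeff s Q.1 * (‖testSeq n s (1/p - 1/q) p Q.1‖₊ : ℝ≥0∞) * ind Q.1 x) ^ p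
      ≤ ∑' j : {j : ℤ // j0 ≤ j},
          (2:ℝ≥0∞) ^ ((j.1:ℝ) * n * (p/q)) * ind (Rcube n j.1) x := by
    intro x
    rw [lqSum, if_neg ofReal_ne_top, ENNReal.toReal_ofReal hq0.le,
      tsum_q_eq hn s p q hq0 j0 x, ← ENNReal.rpow_mul,
      show (1/q) * p = p/q by ring]
    refine le_trans (tsum_rpow_le _ hr0 hr1) (le_of_eq (tsum_congr fun j => ?_))
    rw [mul_ind_rpow _ _ _ hr0, ← ENNReal.rpow_mul]
  have hint : (∫⁻ x in (Rcube n j0).toSet,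
      (lqSum (ENNReal.ofReal q)
        fun Q : {Q : DyadicCube n // Q.toSet ⊆ (Rcube n j0).toSet} =>
          coeff s Q.1 * (‖testSeq n s (1/p - 1/q) p Q.1‖₊ : ℝ≥0∞) * ind Q.1 x) ^ p)
      ≤ (2:ℝ≥0∞) ^ ((j0:ℝ) * c) * K0 := by
    refine le_trans (lintegral_mono hpt) ?_
    rw [lintegral_tsum (fun j => ((measurable_ind _).const_mul _).aemeasurable)]
    have heach : ∀ j : {j : ℤ // j0 ≤ j},
        (∫⁻ x in (Rcube n j0).toSet,
          (2:ℝ≥0∞) ^ ((j.1:ℝ) * n * (p/q)) * ind (Rcube n j.1) x)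
        = (2:ℝ≥0∞) ^ ((j.1:ℝ) * c) := by
      intro j
      rw [lintegral_const_mul_ind _ _ _ (Rcube_subset j.2), volume_Rcube,
        ← ENNReal.rpow_add _ _ (by norm_num) (by norm_num)]
      congr 1
      rw [hc]; ring
    rw [tsum_congr heach, tsum_two_rpow j0 c]
  calc (Rcube n j0).vol ^ (-(1/p - 1/q)) * (∫⁻ x in (Rcube n j0).toSet,
      (lqSum (ENNReal.ofReal q)
        fun Q : {Q : DyadicCube n // Q.toSet ⊆ (Rcube n j0).toSet} =>
          coeff s Q.1 * (‖testSeq n s (1/p - 1/q) p Q.1‖₊ : ℝ≥0∞) * ind Q.1 x) ^ p) ^ (1/p)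
      ≤ (Rcube n j0).vol ^ (-(1/p - 1/q)) * ((2:ℝ≥0∞) ^ ((j0:ℝ) * c) * K0) ^ (1/p) := by
        gcongr
    _ = K0 ^ (1/p) := by
        rw [ENNReal.mul_rpow_of_nonneg _ _ (by positivity),
          show (Rcube n j0).vol = (2:ℝ≥0∞) ^ (-(j0:ℝ) * (n:ℝ)) from rfl,
          ← ENNReal.rpow_mul, ← ENNReal.rpow_mul, ← mul_assoc,
          ← ENNReal.rpow_add _ _ (by norm_num) (by norm_num),
          show -(j0:ℝ) * (n:ℝ) * (-(1/p - 1/q)) + (j0:ℝ) * c * (1/p) = 0 by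
            rw [hc]; field_simp; ring,
          ENNReal.rpow_zero, one_mul]

end Aux

/-- for `s ∈ ℝ`, `p ∈ (0,∞)`, `q ∈ (p,∞)` and `τ := 1/p - 1/q`, the
parameter `τ + 1/q - 1/p` equals `0`, and the test sequence `t` (with
`t_{R_j} = |R_j|^{s/n+1/2+τ-1/p}`, zero otherwise) satisfies
`‖t‖_{ḟ^{s,τ}_{p,q}} < ∞` but `‖t‖_{ḟ^{s,0}_{q,q}} = ‖t‖_{ḟ^s_{q,q}} = ∞`; hence the
claimed equivalence `‖t‖_{ḟ^{s,τ}_{p,q}} ∼ ‖t‖_{ḟ^{s,τ+1/q-1/p}_{q,q}}` fails at the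
endpoint `τ = 1/p - 1/q`. -/
theorem stmt15 (n : ℕ) (hn : 0 < n) (s p q : ℝ)
    (hp : 0 < p) (hpq : p < q) :
    (1 / p - 1 / q) + 1 / q - 1 / p = 0 ∧
    fNorm n s (1 / p - 1 / q) (ENNReal.ofReal p) (ENNReal.ofReal q)
      (testSeq n s (1 / p - 1 / q) p) ≠ ∞ ∧
    fNorm n s 0 (ENNReal.ofReal q) (ENNReal.ofReal q)
      (testSeq n s (1 / p - 1 / q) p) = ∞ := by
  have hq0 : 0 < q := hp.trans hpq
  have hqE : (ENNReal.ofReal q) ≠ ∞ := ofReal_ne_top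
  have hpE : (ENNReal.ofReal p) ≠ ∞ := ofReal_ne_top
  have hqr : (ENNReal.ofReal q).toReal = q := ENNReal.toReal_ofReal hq0.le
  have hpr : (ENNReal.ofReal p).toReal = p := ENNReal.toReal_ofReal hp.le
  refine ⟨by ring, ?_, ?_⟩
  · -- finiteness of the f^{s,τ}_{p,q} norm
    rw [fNorm]
    have hC : (((1 - (2:ℝ≥0∞) ^ ((n:ℝ)*(p/q - 1)))⁻¹) ^ (1/p)) ≠ ⊤ := by
      have hclt : (2:ℝ≥0∞) ^ ((n:ℝ)*(p/q - 1)) < 1 := by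
        apply ENNReal.rpow_lt_one_of_one_lt_of_neg (by norm_num)
        have h1 : p/q < 1 := (div_lt_one hq0).2 hpq
        have hn' : (0:ℝ) < n := by exact_mod_cast hn
        nlinarith
      have hsub : (1:ℝ≥0∞) - (2:ℝ≥0∞) ^ ((n:ℝ)*(p/q - 1)) ≠ 0 :=
        (tsub_pos_of_lt hclt).ne'
      exact ENNReal.rpow_ne_top_of_nonneg (by positivity) (ENNReal.inv_ne_top.2 hsub)
    refine ne_top_of_le_ne_top hC (iSup_le fun P => ?_)
    by_cases hk : P.k = 0
    · rcases P with ⟨j0, k⟩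
      simp only at hk
      subst hk
      exact key_bound hn s p q hp hpq j0
    · rw [term_zero s _ _ p hp hq0 hk]
      exact zero_le
  · -- divergence of the f^{s,0}_{q,q} norm
    rw [fNorm, eq_top_iff]
    have hterm : ((Rcube n 0).vol ^ (-(0:ℝ)) *
        lpIntOn (ENNReal.ofReal q) (Rcube n 0).toSet fun x =>
          lqSum (ENNReal.ofReal q)
            fun Q : {Q : DyadicCube n // Q.toSet ⊆ (Rcube n 0).toSet} =>
              coeff s Q.1 * ‖testSeq n s (1 / p - 1 / q) p Q.1‖₊ * ind Q.1 x) = ⊤ := by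
      rw [neg_zero, ENNReal.rpow_zero, one_mul, lpIntOn, if_neg hqE, hqr]
      have hcollapse : ∀ X : ℝ≥0∞, (X ^ (1/q)) ^ q = X := fun X => by
        rw [← ENNReal.rpow_mul, one_div_mul_cancel hq0.ne', ENNReal.rpow_one]
      have hpt : ∀ x : Fin n → ℝ,
          (lqSum (ENNReal.ofReal q)
            fun Q : {Q : DyadicCube n // Q.toSet ⊆ (Rcube n 0).toSet} =>
              coeff s Q.1 * ‖testSeq n s (1 / p - 1 / q) p Q.1‖₊ * ind Q.1 x) ^ q
          = ∑' j : {j : ℤ // (0:ℤ) ≤ j}, (2:ℝ≥0∞) ^ ((j.1:ℝ) * n) * ind (Rcube n j.1) x := by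
        intro x
        rw [lqSum, if_neg hqE, hqr, hcollapse, tsum_q_eq hn s p q hq0 0 x]
      have hint : (∫⁻ x in (Rcube n 0).toSet,
          (lqSum (ENNReal.ofReal q)
            fun Q : {Q : DyadicCube n // Q.toSet ⊆ (Rcube n 0).toSet} =>
              coeff s Q.1 * ‖testSeq n s (1 / p - 1 / q) p Q.1‖₊ * ind Q.1 x) ^ q) = ⊤ := by
        rw [lintegral_congr hpt]
        rw [lintegral_tsum (fun j => ((measurable_ind _).const_mul _).aemeasurable)]
        have hone : ∀ j : {j : ℤ // (0:ℤ) ≤ j},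
            (∫⁻ x in (Rcube n 0).toSet, (2:ℝ≥0∞) ^ ((j.1:ℝ) * n) * ind (Rcube n j.1) x)
              = 1 := by
          intro j
          rw [lintegral_const_mul_ind _ _ _ (Rcube_subset j.2), volume_Rcube,
            ← ENNReal.rpow_add _ _ (by norm_num) (by norm_num)]
          norm_num
        rw [tsum_congr hone]
        haveI : Infinite {j : ℤ // (0:ℤ) ≤ j} :=
          Infinite.of_injective (fun m : ℕ => (⟨(m:ℤ), Int.ofNat_nonneg m⟩ : {j : ℤ // (0:ℤ) ≤ j}))
            (fun a b h => by simpa using congrArg Subtype.val h)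
        exact ENNReal.tsum_const_eq_top_of_ne_zero one_ne_zero
      rw [hint]
      exact ENNReal.top_rpow_of_pos (by positivity)
    refine le_trans ?_ (le_iSup _ (Rcube n 0))
    exact hterm.ge
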